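/- arXiv:2208.12313 — 4 statements merged into one kernel-verified Lean document; each statement's English description precedes it below -/
import Mathlib

section
/- Consider the ADMM iteration for the sparse array beamforming problem, generating sequences (w_k, v_k, u_k) for k = 0, 1, 2, …. Then for every k ≥ 1, L(w_{k+1}, v_{k+1}, u_{k+1}) − L(w_k, v_k, u_k) ≤ (4λ_max²(R_x)/ρ − λ_min(R_x) − ρ/2) · ‖v_{k+1} − v_k‖₂², where λ_max(R_x) and λ_min(R_x) are the largest and smallest eigenvalues of R_x. -/
open scoped ComplexOrder

/-- Action of an `M×M` complex matrix on `ℂ^M` (Euclidean space). -/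
noncomputable def mulVecE {M : ℕ} (A : Matrix (Fin M) (Fin M) ℂ)
    (x : EuclideanSpace ℂ (Fin M)) : EuclideanSpace ℂ (Fin M) :=
  WithLp.toLp 2 (fun i => ∑ j, A i j * x j)

/-- Augmented Lagrangian `L(w,v,u) = λ‖w‖₁ + vᴴR_x v + (ρ/2)(‖w−v+u‖₂² − ‖u‖₂²)`. -/
noncomputable def lagr {M : ℕ} (Rx : Matrix (Fin M) (Fin M) ℂ) (lam ρ : ℝ)
    (w v u : EuclideanSpace ℂ (Fin M)) : ℝ :=
  lam * ∑ i, ‖w i‖ + (inner ℂ v (mulVecE Rx v) : ℂ).re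
    + ρ / 2 * (‖w - v + u‖ ^ 2 - ‖u‖ ^ 2)

/-!
The `v`-update is the exact minimiser of the quadratic `v ↦ vᴴR_x v + (ρ/2)‖w_{k+1} − v + u_k‖²`,
and its optimality condition combined with the `u`-update gives `ρ u_{k+1} = 2 R_x v_{k+1}` for
all `k`. Split `L_{k+1} − L_k` into the `w`-, `v`- and `u`-steps: the `w`-step does not increase `L`
(`w_k` is feasible because `k ≥ 1`); expanding the quadratic around its stationary point, the
`v`-step decreases `L` by at least `(λ_min + ρ/2)‖v_{k+1} − v_k‖²`; and the `u`-step increases it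
by exactly `ρ‖u_{k+1} − u_k‖² = (4/ρ)‖R_x (v_{k+1} − v_k)‖² ≤ (4λ_max²/ρ)‖v_{k+1} − v_k‖²`.
-/

open scoped InnerProductSpace

section Quadratic

variable {𝕜 E : Type*} [RCLike 𝕜] [NormedAddCommGroup E] [InnerProductSpace 𝕜 E] {T : E →ₗ[𝕜] E}

theorem LinearMap.IsSymmetric.re_inner_add_norm_sub_sq_eq_of_stationary (hT : T.IsSymmetric)
    {ρ : ℝ} {a v₀ : E} (hv₀ : (ρ : 𝕜) • (a - v₀) = (2 : 𝕜) • T v₀) (v : E) :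
    RCLike.re ⟪v, T v⟫_𝕜 + ρ / 2 * ‖a - v‖ ^ 2 =
      RCLike.re ⟪v₀, T v₀⟫_𝕜 + ρ / 2 * ‖a - v₀‖ ^ 2 +
        (RCLike.re ⟪v - v₀, T (v - v₀)⟫_𝕜 + ρ / 2 * ‖v - v₀‖ ^ 2) := by
  obtain ⟨d, rfl⟩ : ∃ d, v = v₀ + d := ⟨v - v₀, (add_sub_cancel v₀ v).symm⟩
  rw [add_sub_cancel_left]
  have hquad : RCLike.re ⟪v₀ + d, T (v₀ + d)⟫_𝕜 =
      RCLike.re ⟪v₀, T v₀⟫_𝕜 + 2 * RCLike.re ⟪T v₀, d⟫_𝕜 + RCLike.re ⟪d, T d⟫_𝕜 := by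
    have hsymm : RCLike.re ⟪v₀, T d⟫_𝕜 = RCLike.re ⟪T v₀, d⟫_𝕜 := by rw [hT]
    rw [map_add, inner_add_left, inner_add_right, inner_add_right, map_add, map_add, map_add]
    linear_combination hsymm + inner_re_symm (𝕜 := 𝕜) d (T v₀)
  have hcross : ρ * RCLike.re ⟪a - v₀, d⟫_𝕜 = 2 * RCLike.re ⟪T v₀, d⟫_𝕜 := by
    simpa [inner_smul_real_left, inner_smul_left, RCLike.smul_re] using
      congrArg (fun x => RCLike.re ⟪x, d⟫_𝕜) hv₀
  have hnorm : ‖a - (v₀ + d)‖ ^ 2 = ‖a - v₀‖ ^ 2 - 2 * RCLike.re ⟪a - v₀, d⟫_𝕜 + ‖d‖ ^ 2 := by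
    rw [← sub_sub, @norm_sub_sq 𝕜]
  linear_combination hquad + ρ / 2 * hnorm - hcross

end Quadratic

namespace OrthonormalBasis

variable {𝕜 E ι : Type*} [RCLike 𝕜] [NormedAddCommGroup E] [InnerProductSpace 𝕜 E] [Fintype ι]
  (b : OrthonormalBasis ι 𝕜 E) {T : E →ₗ[𝕜] E} {μ : ι → ℝ}

theorem repr_apply_of_apply_eq_smul (hT : ∀ i, T (b i) = (μ i : 𝕜) • b i) (x : E) (i : ι) :
    b.repr (T x) i = μ i * b.repr x i := by
  classical
  conv_lhs => rw [← b.sum_repr x]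
  simp [hT, b.repr_self, Pi.single_apply, RCLike.real_smul_eq_coe_mul, mul_comm]

theorem norm_sq_eq_sum (x : E) : ‖x‖ ^ 2 = ∑ i, ‖b.repr x i‖ ^ 2 := by
  rw [← b.repr.norm_map, EuclideanSpace.norm_sq_eq]

theorem re_inner_apply_self_eq_sum (hT : ∀ i, T (b i) = (μ i : 𝕜) • b i) (x : E) :
    RCLike.re ⟪x, T x⟫_𝕜 = ∑ i, μ i * ‖b.repr x i‖ ^ 2 := by
  rw [← b.repr.inner_map_map, PiLp.inner_apply, map_sum]
  refine Finset.sum_congr rfl fun i _ => ?_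
  rw [b.repr_apply_of_apply_eq_smul hT, RCLike.inner_apply, mul_assoc, RCLike.mul_conj,
    RCLike.re_ofReal_mul]
  norm_cast

theorem norm_apply_sq_eq_sum (hT : ∀ i, T (b i) = (μ i : 𝕜) • b i) (x : E) :
    ‖T x‖ ^ 2 = ∑ i, μ i ^ 2 * ‖b.repr x i‖ ^ 2 := by
  simp only [b.norm_sq_eq_sum, b.repr_apply_of_apply_eq_smul hT, norm_mul, RCLike.norm_ofReal,
    mul_pow, sq_abs]

theorem mul_norm_sq_le_re_inner_apply_self (hT : ∀ i, T (b i) = (μ i : 𝕜) • b i) {c : ℝ}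
    (hc : ∀ i, c ≤ μ i) (x : E) : c * ‖x‖ ^ 2 ≤ RCLike.re ⟪x, T x⟫_𝕜 := by
  rw [b.norm_sq_eq_sum, b.re_inner_apply_self_eq_sum hT, Finset.mul_sum]
  gcongr with i
  exact hc i

theorem norm_apply_sq_le (hT : ∀ i, T (b i) = (μ i : 𝕜) • b i) {c : ℝ}
    (hc : ∀ i, |μ i| ≤ c) (x : E) : ‖T x‖ ^ 2 ≤ c ^ 2 * ‖x‖ ^ 2 := by
  rw [b.norm_apply_sq_eq_sum hT, b.norm_sq_eq_sum x, Finset.mul_sum]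
  refine Finset.sum_le_sum fun i _ => ?_
  exact mul_le_mul_of_nonneg_right (sq_le_sq.mpr ((hc i).trans (le_abs_self c))) (sq_nonneg _)

end OrthonormalBasis

theorem Matrix.IsHermitian.toEuclideanLin_eigenvectorBasis {𝕜 n : Type*} [RCLike 𝕜] [Fintype n]
    [DecidableEq n] {A : Matrix n n 𝕜} (hA : A.IsHermitian) (i : n) :
    A.toEuclideanLin (hA.eigenvectorBasis i) = (hA.eigenvalues i : 𝕜) • hA.eigenvectorBasis i := by
  rw [Matrix.toLpLin_apply, hA.mulVec_eigenvectorBasis, WithLp.toLp_smul, WithLp.toLp_ofLp,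
    RCLike.real_smul_eq_coe_smul (K := 𝕜)]

section ADMM

variable {M : ℕ} {Rx : Matrix (Fin M) (Fin M) ℂ} {lam ρ : ℝ} {w v u : EuclideanSpace ℂ (Fin M)}

theorem mulVecE_eq_toEuclideanLin (A : Matrix (Fin M) (Fin M) ℂ) (x : EuclideanSpace ℂ (Fin M)) :
    mulVecE A x = A.toEuclideanLin x :=
  rfl

theorem lagr_le_lagr_of_le {w' : EuclideanSpace ℂ (Fin M)}
    (h : lam * ∑ i, ‖w' i‖ + ρ / 2 * ‖w' - v + u‖ ^ 2 ≤
      lam * ∑ i, ‖w i‖ + ρ / 2 * ‖w - v + u‖ ^ 2) :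
    lagr Rx lam ρ w' v u ≤ lagr Rx lam ρ w v u := by
  unfold lagr
  linarith

theorem lagr_add_le_of_stationary (hRx : Rx.IsHermitian) {lmin : ℝ}
    (hlmin : ∀ i, lmin ≤ hRx.eigenvalues i) {v' : EuclideanSpace ℂ (Fin M)}
    (hv' : (ρ : ℂ) • (w + u - v') = (2 : ℂ) • mulVecE Rx v') :
    lagr Rx lam ρ w v' u + (lmin + ρ / 2) * ‖v' - v‖ ^ 2 ≤ lagr Rx lam ρ w v u := by
  have hexp := (Matrix.isSymmetric_toEuclideanLin_iff.mpr hRx)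
    |>.re_inner_add_norm_sub_sq_eq_of_stationary hv' v
  have hlow := hRx.eigenvectorBasis.mul_norm_sq_le_re_inner_apply_self
    hRx.toEuclideanLin_eigenvectorBasis hlmin (v - v')
  simp only [RCLike.re_to_complex] at hexp hlow
  simp only [lagr, mulVecE_eq_toEuclideanLin, sub_add_eq_add_sub, norm_sub_rev v' v]
  linarith

theorem lagr_dual_update {u' : EuclideanSpace ℂ (Fin M)} (hu' : u' = u + w - v) :
    lagr Rx lam ρ w v u' = lagr Rx lam ρ w v u + ρ * ‖u' - u‖ ^ 2 := by
  have hpar := parallelogram_law_with_norm ℂ u' (u' - u)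
  have h₁ : w - v + u' = u' + (u' - u) := by rw [hu']; abel
  have h₂ : w - v + u = u' := by rw [hu']; abel
  have h₃ : u' - (u' - u) = u := by abel
  rw [h₃] at hpar
  unfold lagr
  rw [h₁, h₂]
  linear_combination ρ / 2 * hpar

theorem smul_sub_eq_two_smul_mulVecE_of_eq_smul_inv (hRx : Rx.PosSemidef) (hρ : 0 < ρ)
    {y : EuclideanSpace ℂ (Fin M)} (hv : v = (ρ : ℂ) • mulVecE (2 • Rx + (ρ : ℂ) • 1)⁻¹ y) :
    (ρ : ℂ) • (y - v) = (2 : ℂ) • mulVecE Rx v := by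
  have hB : (2 • Rx + (ρ : ℂ) • 1).PosDef :=
    Matrix.PosDef.posSemidef_add (two_nsmul Rx ▸ hRx.add hRx)
      (Matrix.PosDef.one.smul (by exact_mod_cast hρ))
  have hBv : mulVecE (2 • Rx + (ρ : ℂ) • 1) v = (ρ : ℂ) • y := by
    rw [hv, mulVecE_eq_toEuclideanLin, mulVecE_eq_toEuclideanLin, map_smul,
      ← LinearMap.comp_apply, ← Matrix.toLpLin_mul_same,
      Matrix.mul_nonsing_inv _ ((Matrix.isUnit_iff_isUnit_det _).mp hB.isUnit),
      Matrix.toLpLin_one, LinearMap.id_apply]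
  simp only [mulVecE_eq_toEuclideanLin, map_add, map_nsmul, map_smul, Matrix.toLpLin_one,
    LinearMap.add_apply, LinearMap.smul_apply, LinearMap.id_apply] at hBv ⊢
  rw [smul_sub, ← hBv, two_nsmul, two_smul]
  abel

theorem mul_norm_sub_sq_le_of_smul_eq (hRx : Rx.IsHermitian) {lmax : ℝ}
    (hlmax : ∀ i, |hRx.eigenvalues i| ≤ lmax) (hρ : 0 < ρ) {u₀ u₁ v₀ v₁ : EuclideanSpace ℂ (Fin M)}
    (h₀ : (ρ : ℂ) • u₀ = (2 : ℂ) • mulVecE Rx v₀) (h₁ : (ρ : ℂ) • u₁ = (2 : ℂ) • mulVecE Rx v₁) :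
    ρ * ‖u₁ - u₀‖ ^ 2 ≤ 4 * lmax ^ 2 / ρ * ‖v₁ - v₀‖ ^ 2 := by
  have h : (ρ : ℂ) • (u₁ - u₀) = (2 : ℂ) • Rx.toEuclideanLin (v₁ - v₀) := by
    rw [smul_sub, h₀, h₁, map_sub, smul_sub, mulVecE_eq_toEuclideanLin, mulVecE_eq_toEuclideanLin]
  have hn : ρ ^ 2 * ‖u₁ - u₀‖ ^ 2 = 4 * ‖Rx.toEuclideanLin (v₁ - v₀)‖ ^ 2 := by
    have := congrArg (‖·‖ ^ 2) h
    simp only [norm_smul, Complex.norm_real, Complex.norm_ofNat, Real.norm_eq_abs, mul_pow,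
      sq_abs] at this
    linear_combination this
  have hb := hRx.eigenvectorBasis.norm_apply_sq_le hRx.toEuclideanLin_eigenvectorBasis hlmax
    (v₁ - v₀)
  rw [div_mul_eq_mul_div, le_div_iff₀ hρ]
  nlinarith

end ADMM

theorem admm_lagrangian_descent_bound_general
    {M : ℕ} (lam ρ : ℝ) (hρ : 0 < ρ)
    (Rx : Matrix (Fin M) (Fin M) ℂ) (hRx : Rx.PosSemidef)
    (a0 : EuclideanSpace ℂ (Fin M))
    (lmax lmin : ℝ)
    (hlmax : IsGreatest (Set.range hRx.1.eigenvalues) lmax)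
    (hlmin : IsLeast (Set.range hRx.1.eigenvalues) lmin)
    (w v u : ℕ → EuclideanSpace ℂ (Fin M))
    (hw : ∀ k : ℕ, 1 ≤ ‖(inner ℂ a0 (w (k + 1)) : ℂ)‖ ^ 2 ∧
      ∀ x : EuclideanSpace ℂ (Fin M), 1 ≤ ‖(inner ℂ a0 x : ℂ)‖ ^ 2 →
        lam * ∑ i, ‖w (k + 1) i‖ + ρ / 2 * ‖w (k + 1) - v k + u k‖ ^ 2 ≤
        lam * ∑ i, ‖x i‖ + ρ / 2 * ‖x - v k + u k‖ ^ 2)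
    (hv : ∀ k : ℕ, v (k + 1) = (ρ : ℂ) • mulVecE (2 • Rx + (ρ : ℂ) • 1)⁻¹ (w (k + 1) + u k))
    (hu : ∀ k : ℕ, u (k + 1) = u k + w (k + 1) - v (k + 1)) :
    ∀ k : ℕ, 1 ≤ k →
      lagr Rx lam ρ (w (k + 1)) (v (k + 1)) (u (k + 1)) -
        lagr Rx lam ρ (w k) (v k) (u k) ≤
      (4 * lmax ^ 2 / ρ - lmin - ρ / 2) * ‖v (k + 1) - v k‖ ^ 2 := by
  intro k hk
  obtain ⟨m, rfl⟩ := Nat.exists_eq_add_of_le' hk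
  have hdual (j : ℕ) : (ρ : ℂ) • u (j + 1) = (2 : ℂ) • mulVecE Rx (v (j + 1)) := by
    rw [hu j, add_comm (u j)]
    exact smul_sub_eq_two_smul_mulVecE_of_eq_smul_inv hRx hρ (hv j)
  have hw_step := lagr_le_lagr_of_le (Rx := Rx) ((hw (m + 1)).2 (w (m + 1)) (hw m).1)
  have hstationary : (ρ : ℂ) • (w (m + 1 + 1) + u (m + 1) - v (m + 1 + 1)) =
      (2 : ℂ) • mulVecE Rx (v (m + 1 + 1)) := by
    rw [add_comm (w _), ← hu]
    exact hdual (m + 1)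
  have hv_step := lagr_add_le_of_stationary (lam := lam) (v := v (m + 1)) hRx.1
    (fun i => hlmin.2 ⟨i, rfl⟩) hstationary
  have hu_step := lagr_dual_update (Rx := Rx) (lam := lam) (ρ := ρ) (hu (m + 1))
  have hresidual := mul_norm_sub_sq_le_of_smul_eq hRx.1
    (fun i => (abs_of_nonneg (hRx.eigenvalues_nonneg i)).trans_le (hlmax.2 ⟨i, rfl⟩)) hρ
    (hdual m) (hdual (m + 1))
  linarith

/-- Along the ADMM iteration for the sparse array beamforming problem, for every
`k ≥ 1`, `L_{k+1} − L_k ≤ (4λ_max²(R_x)/ρ − λ_min(R_x) − ρ/2)‖v_{k+1} − v_k‖₂²`. -/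
theorem admm_lagrangian_descent_bound
    {M : ℕ} (lam ρ : ℝ) (hlam : 0 < lam) (hρ : 0 < ρ)
    (Rx : Matrix (Fin M) (Fin M) ℂ) (hRx : Rx.PosSemidef)
    (a0 : EuclideanSpace ℂ (Fin M)) (ha0 : a0 ≠ 0)
    (lmax lmin : ℝ)
    (hlmax : IsGreatest (Set.range hRx.1.eigenvalues) lmax)
    (hlmin : IsLeast (Set.range hRx.1.eigenvalues) lmin)
    (w v u : ℕ → EuclideanSpace ℂ (Fin M))
    (hw : ∀ k : ℕ, 1 ≤ ‖(inner ℂ a0 (w (k + 1)) : ℂ)‖ ^ 2 ∧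
      ∀ x : EuclideanSpace ℂ (Fin M), 1 ≤ ‖(inner ℂ a0 x : ℂ)‖ ^ 2 →
        lam * ∑ i, ‖w (k + 1) i‖ + ρ / 2 * ‖w (k + 1) - v k + u k‖ ^ 2 ≤
        lam * ∑ i, ‖x i‖ + ρ / 2 * ‖x - v k + u k‖ ^ 2)
    (hv : ∀ k : ℕ, v (k + 1) = (ρ : ℂ) • mulVecE (2 • Rx + (ρ : ℂ) • 1)⁻¹ (w (k + 1) + u k))
    (hu : ∀ k : ℕ, u (k + 1) = u k + w (k + 1) - v (k + 1)) :
    ∀ k : ℕ, 1 ≤ k →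
      lagr Rx lam ρ (w (k + 1)) (v (k + 1)) (u (k + 1)) -
        lagr Rx lam ρ (w k) (v k) (u k) ≤
      (4 * lmax ^ 2 / ρ - lmin - ρ / 2) * ‖v (k + 1) - v k‖ ^ 2 :=
  admm_lagrangian_descent_bound_general lam ρ hρ Rx hRx a0 lmax lmin hlmax hlmin w v u hw hv hu
end

section
/- (Lemma 2, boundedness) Let R_x be an M×M Hermitian positive definite matrix with largest eigenvalue λ_max(R_x) and smallest eigenvalue λ_min(R_x) > 0, let λ ≥ 0, and let ρ > 0 satisfy ρ ≥ 2λ_max²(R_x)/λ_min(R_x). Then for all w, v ∈ ℂ^M, taking u = (2/ρ) R_x v, the augmented Lagrangian satisfies L(w, v, u) = λ‖w‖₁ + vᴴR_x v + (ρ/2)(‖w − v + u‖₂² − ‖u‖₂²) ≥ 0; i.e., along points where u = (2/ρ)R_x v, the augmented Lagrangian is bounded from below by 0. -/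
/-!
With `u = (2/ρ) R v`, expanding the square gives
`L = λ‖w‖₁ + (ρ/2)‖w - v + u‖² + (vᴴ R v - (2/ρ)‖R v‖²)`, so it suffices that
`‖R v‖² ≤ (ρ/2) vᴴ R v`. This holds for any Hermitian `R` with spectrum in `[0, ρ/2]`, since then
`(ρ/2) R - R²` is positive semidefinite; and `λ_max ≤ ρ/2` follows from
`2 λ_max² ≤ ρ λ_min ≤ ρ λ_max`.
-/

open scoped ComplexOrder

namespace Matrix

variable {n 𝕜 : Type*} [Fintype n] [DecidableEq n] [RCLike 𝕜] {A : Matrix n n 𝕜}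

/-- Diagonalizing `A = U D Uᴴ` turns `c A - A²` into `U (c D - D²) Uᴴ`, whose diagonal entries
`μ (c - μ)` are nonnegative. -/
lemma IsHermitian.posSemidef_smul_sub_mul_self (hA : A.IsHermitian) {c : ℝ}
    (h0 : ∀ i, 0 ≤ hA.eigenvalues i) (hc : ∀ i, hA.eigenvalues i ≤ c) :
    (c • A - A * A).PosSemidef := by
  rw [RCLike.real_smul_eq_coe_smul (K := 𝕜), hA.spectral_theorem, ← map_smul, ← map_mul,
    ← map_sub, Unitary.conjStarAlgAut_apply, star_eq_conjTranspose, diagonal_mul_diagonal,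
    ← diagonal_smul, diagonal_sub]
  refine PosSemidef.mul_mul_conjTranspose_same (posSemidef_diagonal_iff.mpr fun i => ?_) _
  simp only [Pi.smul_apply, Function.comp_apply, smul_eq_mul, ← RCLike.ofReal_mul,
    ← RCLike.ofReal_sub, RCLike.ofReal_nonneg]
  nlinarith [h0 i, hc i]

lemma IsHermitian.norm_toEuclideanLin_sq_le (hA : A.IsHermitian) {c : ℝ}
    (h0 : ∀ i, 0 ≤ hA.eigenvalues i) (hc : ∀ i, hA.eigenvalues i ≤ c) (v : EuclideanSpace 𝕜 n) :
    ‖A.toEuclideanLin v‖ ^ 2 ≤ c * RCLike.re (inner 𝕜 v (A.toEuclideanLin v)) := by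
  have h := (isPositive_toEuclideanLin_iff.mpr (hA.posSemidef_smul_sub_mul_self h0 hc))
    |>.re_inner_nonneg_right v
  rw [RCLike.real_smul_eq_coe_smul (K := 𝕜), map_sub, map_smul, toLpLin_mul_same,
    LinearMap.sub_apply, LinearMap.smul_apply, LinearMap.comp_apply, inner_sub_right,
    inner_smul_right, ← isSymmetric_toEuclideanLin_iff.mpr hA v (A.toEuclideanLin v), map_sub,
    RCLike.re_ofReal_mul, inner_self_eq_norm_sq (𝕜 := 𝕜)] at h
  linarith

end Matrix

lemma lagr_nonneg_of_mul_norm_sq_le {M : ℕ} {Rx : Matrix (Fin M) (Fin M) ℂ} {lam ρ : ℝ}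
    (hlam : 0 ≤ lam) (hρ : 0 ≤ ρ) (w : EuclideanSpace ℂ (Fin M)) {v u : EuclideanSpace ℂ (Fin M)}
    (hu : ρ / 2 * ‖u‖ ^ 2 ≤ (inner ℂ v (mulVecE Rx v)).re) :
    0 ≤ lagr Rx lam ρ w v u := by
  have hw : 0 ≤ lam * ∑ i, ‖w i‖ := by positivity
  have hwvu : 0 ≤ ρ / 2 * ‖w - v + u‖ ^ 2 := by positivity
  rw [lagr]
  linarith

/-- Lemma 2, boundedness: If `R_x ≻ 0` with `λ_min(R_x) > 0` and
`ρ ≥ 2λ_max²(R_x)/λ_min(R_x)`, then for all `w, v`, taking `u = (2/ρ)R_x v`,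
`L(w, v, u) ≥ 0`. -/
theorem admm_lagrangian_bounded_below
    {M : ℕ} (lam ρ : ℝ) (hlam : 0 ≤ lam) (hρ : 0 < ρ)
    (Rx : Matrix (Fin M) (Fin M) ℂ) (hRx : Rx.PosDef)
    (lmax lmin : ℝ)
    (hlmax : IsGreatest (Set.range hRx.1.eigenvalues) lmax)
    (hlmin : IsLeast (Set.range hRx.1.eigenvalues) lmin)
    (hlmin_pos : 0 < lmin)
    (hρ_big : 2 * lmax ^ 2 / lmin ≤ ρ) :
    ∀ w v : EuclideanSpace ℂ (Fin M),
      0 ≤ lagr Rx lam ρ w v (((2 / ρ : ℝ) : ℂ) • mulVecE Rx v) := by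
  intro w v
  have hlmin_le : lmin ≤ lmax := hlmin.2 hlmax.1
  -- `2 lmax² ≤ ρ lmin ≤ ρ lmax`
  have hlmax_le : lmax ≤ ρ / 2 := by
    have := (div_le_iff₀ hlmin_pos).mp hρ_big
    nlinarith
  have key : ‖mulVecE Rx v‖ ^ 2 ≤ ρ / 2 * (inner ℂ v (mulVecE Rx v)).re :=
    hRx.1.norm_toEuclideanLin_sq_le (fun i => (hRx.eigenvalues_pos i).le)
      (fun i => (hlmax.2 ⟨i, rfl⟩).trans hlmax_le) v
  refine lagr_nonneg_of_mul_norm_sq_le hlam hρ.le w ?_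
  rw [norm_smul, Complex.norm_real, Real.norm_of_nonneg (by positivity)]
  calc ρ / 2 * (2 / ρ * ‖mulVecE Rx v‖) ^ 2 = 2 / ρ * ‖mulVecE Rx v‖ ^ 2 := by
        field_simp
    _ ≤ 2 / ρ * (ρ / 2 * (inner ℂ v (mulVecE Rx v)).re) := by gcongr
    _ = (inner ℂ v (mulVecE Rx v)).re := by field_simp
end

section
/- (Theorem 1, part 1: convergence of the augmented Lagrangian values) Consider the ADMM iteration for the sparse array beamforming problem, where R_x is Hermitian positive definite with λ_min(R_x) > 0, and suppose the augmented Lagrangian parameter satisfies ρ ≥ max{ 2√2 · λ_max(R_x), 2λ_max²(R_x)/λ_min(R_x) }. Then the real-valued objective function value sequence { L(w_k, v_k, u_k) }_{k ≥ 1} generated by the algorithm converges (to a finite limit). -/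
open scoped ComplexOrder

/-!
Combining the optimality condition of the `v`-step, `2 R_x v_{k+1} = ρ (w_{k+1} + u_k - v_{k+1})`,
with the dual update gives `ρ u_{k+1} = 2 R_x v_{k+1}`. Hence the increase `ρ ‖u_{k+1} - u_k‖²`
of `L` in the dual step is at most `(4 λ_max² / ρ) ‖v_{k+1} - v_k‖²`, which the decrease
`(λ_min + ρ/2) ‖v_{k+1} - v_k‖²` of the strongly convex `v`-step absorbs once `ρ ≥ 2√2 λ_max`;
the `w`-step does not increase `L`. The same identity gives
`(ρ/2) ‖u_k‖² ≤ (2 λ_max² / ρ) ‖v_k‖² ≤ vᴴ R_x v`, so `L ≥ 0` once `ρ ≥ 2 λ_max² / λ_min`.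
From `k = 1` on, `L` is thus nonincreasing and bounded below.
-/

open Filter Topology Matrix
open scoped InnerProductSpace

namespace Matrix.IsHermitian

variable {𝕜 n : Type*} [RCLike 𝕜] [Fintype n] [DecidableEq n] {A : Matrix n n 𝕜}

lemma eigenvectorBasis_repr_toEuclideanLin (hA : A.IsHermitian) (x : EuclideanSpace 𝕜 n)
    (i : n) :
    hA.eigenvectorBasis.repr (toEuclideanLin A x) i
      = hA.eigenvalues i * hA.eigenvectorBasis.repr x i := by
  have hsymm := isSymmetric_toEuclideanLin_iff.mpr hA
  have heig : toEuclideanLin A (hA.eigenvectorBasis i)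
      = (hA.eigenvalues i : 𝕜) • hA.eigenvectorBasis i := by
    rw [← RCLike.real_smul_eq_coe_smul]
    exact congrArg (WithLp.toLp 2) (hA.mulVec_eigenvectorBasis i)
  rw [OrthonormalBasis.repr_apply_apply, OrthonormalBasis.repr_apply_apply, ← hsymm, heig,
    inner_smul_left, RCLike.conj_ofReal]

lemma re_inner_toEuclideanLin_self (hA : A.IsHermitian) (x : EuclideanSpace 𝕜 n) :
    RCLike.re ⟪x, toEuclideanLin A x⟫_𝕜
      = ∑ i, hA.eigenvalues i * ‖hA.eigenvectorBasis.repr x i‖ ^ 2 := by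
  rw [← hA.eigenvectorBasis.repr.inner_map_map, PiLp.inner_apply, map_sum]
  refine Finset.sum_congr rfl fun i _ => ?_
  rw [eigenvectorBasis_repr_toEuclideanLin, RCLike.inner_apply, mul_assoc,
    RCLike.mul_conj, ← RCLike.ofReal_pow, ← RCLike.ofReal_mul, RCLike.ofReal_re]

lemma mul_sq_norm_le_re_inner_toEuclideanLin_self (hA : A.IsHermitian) {c : ℝ}
    (hc : ∀ i, c ≤ hA.eigenvalues i) (x : EuclideanSpace 𝕜 n) :
    c * ‖x‖ ^ 2 ≤ RCLike.re ⟪x, toEuclideanLin A x⟫_𝕜 := by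
  rw [re_inner_toEuclideanLin_self hA, ← hA.eigenvectorBasis.repr.norm_map,
    EuclideanSpace.norm_sq_eq, Finset.mul_sum]
  exact Finset.sum_le_sum fun i _ => mul_le_mul_of_nonneg_right (hc i) (sq_nonneg _)

lemma norm_toEuclideanLin_le (hA : A.IsHermitian) {c : ℝ} (hc₀ : 0 ≤ c)
    (hc : ∀ i, |hA.eigenvalues i| ≤ c) (x : EuclideanSpace 𝕜 n) :
    ‖toEuclideanLin A x‖ ≤ c * ‖x‖ := by
  refine (pow_le_pow_iff_left₀ (norm_nonneg _) (by positivity) two_ne_zero).1 ?_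
  rw [mul_pow, ← hA.eigenvectorBasis.repr.norm_map, ← hA.eigenvectorBasis.repr.norm_map x,
    EuclideanSpace.norm_sq_eq, EuclideanSpace.norm_sq_eq, Finset.mul_sum]
  refine Finset.sum_le_sum fun i _ => ?_
  rw [eigenvectorBasis_repr_toEuclideanLin, norm_mul, mul_pow, RCLike.norm_ofReal]
  gcongr
  exact hc i

end Matrix.IsHermitian

section AugmentedLagrangian

variable {𝕜 E : Type*} [RCLike 𝕜] [NormedAddCommGroup E] [InnerProductSpace 𝕜 E]
  {T : E →ₗ[𝕜] E} {f : E → ℝ} {ρ lmin lmax : ℝ}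

noncomputable def augLagrangian (T : E →ₗ[𝕜] E) (f : E → ℝ) (ρ : ℝ) (w v u : E) : ℝ :=
  f w + RCLike.re ⟪v, T v⟫_𝕜 + ρ / 2 * (‖w - v + u‖ ^ 2 - ‖u‖ ^ 2)

lemma augLagrangian_dual_update {w v u u' : E} (hu : u' = u + w - v) :
    augLagrangian T f ρ w v u' = augLagrangian T f ρ w v u + ρ * ‖u' - u‖ ^ 2 := by
  have hwv : w - v = u' - u := by rw [hu]; abel
  have hsum : ‖w - v + u‖ ^ 2 = ‖u'‖ ^ 2 := by rw [hwv, sub_add_cancel]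
  have hsucc : ‖w - v + u'‖ ^ 2 = ‖u'‖ ^ 2 + 2 * RCLike.re ⟪u', u' - u⟫_𝕜 + ‖u' - u‖ ^ 2 := by
    rw [hwv, add_comm, norm_add_sq (𝕜 := 𝕜)]
  have hprev : ‖u‖ ^ 2 = ‖u'‖ ^ 2 - 2 * RCLike.re ⟪u', u' - u⟫_𝕜 + ‖u' - u‖ ^ 2 := by
    rw [← norm_sub_sq (𝕜 := 𝕜), sub_sub_cancel]
  simp only [augLagrangian]
  rw [hsum, hsucc, hprev]
  ring

/- `hopt` says that `v'` is a stationary point of the quadratic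
`v ↦ re ⟪v, T v⟫ + ρ/2 ‖w - v + u‖²`, so the first-order terms in `v - v'` cancel. -/
lemma augLagrangian_primal_update_le (hT : T.IsSymmetric)
    (hlow : ∀ x, lmin * ‖x‖ ^ 2 ≤ RCLike.re ⟪x, T x⟫_𝕜) {w v v' u : E}
    (hopt : (2 : 𝕜) • T v' = (ρ : 𝕜) • (w + u - v')) :
    augLagrangian T f ρ w v' u + (lmin + ρ / 2) * ‖v' - v‖ ^ 2
      ≤ augLagrangian T f ρ w v u := by
  set d := v - v'
  have hquad : RCLike.re ⟪v, T v⟫_𝕜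
      = RCLike.re ⟪v', T v'⟫_𝕜 + 2 * RCLike.re ⟪d, T v'⟫_𝕜 + RCLike.re ⟪d, T d⟫_𝕜 := by
    have hv : v = v' + d := by simp [d]
    have hcross : RCLike.re ⟪v', T d⟫_𝕜 = RCLike.re ⟪d, T v'⟫_𝕜 := by
      rw [← hT, ← inner_conj_symm, RCLike.conj_re]
    rw [hv, map_add, inner_add_left, inner_add_right, inner_add_right, map_add, map_add,
      map_add, hcross]
    ring
  have hpen : ‖w - v + u‖ ^ 2
      = ‖w + u - v'‖ ^ 2 - 2 * RCLike.re ⟪d, w + u - v'⟫_𝕜 + ‖d‖ ^ 2 := by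
    rw [show w - v + u = (w + u - v') - d by simp only [d]; abel, norm_sub_sq (𝕜 := 𝕜),
      ← inner_conj_symm, RCLike.conj_re]
  have hstat : 2 * RCLike.re ⟪d, T v'⟫_𝕜 = ρ * RCLike.re ⟪d, w + u - v'⟫_𝕜 := by
    have := congrArg (fun z => RCLike.re ⟪d, z⟫_𝕜) hopt
    simpa only [inner_smul_right, RCLike.ofNat_mul_re, RCLike.re_ofReal_mul] using this
  have hnorm : ‖v' - v‖ = ‖d‖ := norm_sub_rev _ _
  simp only [augLagrangian]
  rw [hquad, hpen, hnorm, show w - v' + u = w + u - v' by abel]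
  nlinarith [hlow d]

lemma mul_norm_le_of_smul_eq (hup : ∀ x, ‖T x‖ ≤ lmax * ‖x‖) (hρ : 0 ≤ ρ) {u v : E}
    (h : (ρ : 𝕜) • u = (2 : 𝕜) • T v) : ρ * ‖u‖ ≤ 2 * lmax * ‖v‖ := by
  have := congrArg norm h
  rw [norm_smul, norm_smul, RCLike.norm_ofReal, abs_of_nonneg hρ, RCLike.norm_two] at this
  rw [this, mul_assoc]
  exact mul_le_mul_of_nonneg_left (hup v) zero_le_two

lemma smul_dual_eq_of_update {w v' u u' : E} (hopt : (2 : 𝕜) • T v' = (ρ : 𝕜) • (w + u - v'))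
    (hu : u' = u + w - v') : (ρ : 𝕜) • u' = (2 : 𝕜) • T v' := by
  rw [hopt, hu, add_sub_assoc, add_comm w, add_sub_assoc]

lemma augLagrangian_step_le (hρ : 0 < ρ) (hT : T.IsSymmetric)
    (hlow : ∀ x, lmin * ‖x‖ ^ 2 ≤ RCLike.re ⟪x, T x⟫_𝕜) (hup : ∀ x, ‖T x‖ ≤ lmax * ‖x‖)
    (hlmin : 0 ≤ lmin) (hρ_descent : 8 * lmax ^ 2 ≤ ρ ^ 2) {w v u w' v' u' : E}
    (hdual : (ρ : 𝕜) • u = (2 : 𝕜) • T v)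
    (hw : f w' + ρ / 2 * ‖w' - v + u‖ ^ 2 ≤ f w + ρ / 2 * ‖w - v + u‖ ^ 2)
    (hopt : (2 : 𝕜) • T v' = (ρ : 𝕜) • (w' + u - v')) (hu : u' = u + w' - v') :
    augLagrangian T f ρ w' v' u' ≤ augLagrangian T f ρ w v u := by
  have hdual_sub : (ρ : 𝕜) • (u' - u) = (2 : 𝕜) • T (v' - v) := by
    rw [smul_sub, smul_dual_eq_of_update hopt hu, hdual, map_sub, smul_sub]
  have hΔ := mul_norm_le_of_smul_eq hup hρ.le hdual_sub
  -- squaring `hΔ`: `ρ ‖u' - u‖² ≤ (4 lmax² / ρ) ‖v' - v‖² ≤ (ρ / 2) ‖v' - v‖²`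
  have hascent : ρ * ‖u' - u‖ ^ 2 ≤ (lmin + ρ / 2) * ‖v' - v‖ ^ 2 := by
    have hsq := pow_le_pow_left₀ (by positivity) hΔ 2
    refine le_of_mul_le_mul_left ?_ hρ
    nlinarith [sq_nonneg ‖v' - v‖, mul_nonneg hρ.le hlmin]
  have hwstep : augLagrangian T f ρ w' v u ≤ augLagrangian T f ρ w v u := by
    simp only [augLagrangian]
    linarith
  rw [augLagrangian_dual_update hu]
  linarith [augLagrangian_primal_update_le (f := f) hT hlow hopt (v := v)]

lemma augLagrangian_nonneg (hρ : 0 < ρ) (hlow : ∀ x, lmin * ‖x‖ ^ 2 ≤ RCLike.re ⟪x, T x⟫_𝕜)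
    (hup : ∀ x, ‖T x‖ ≤ lmax * ‖x‖) (hρ_bound : 2 * lmax ^ 2 ≤ ρ * lmin) {w v u : E}
    (hf : 0 ≤ f w) (hdual : (ρ : 𝕜) • u = (2 : 𝕜) • T v) :
    0 ≤ augLagrangian T f ρ w v u := by
  have hΔ := mul_norm_le_of_smul_eq hup hρ.le hdual
  -- squaring `hΔ`: `ρ/2 ‖u‖² ≤ (2 lmax² / ρ) ‖v‖² ≤ lmin ‖v‖²`
  have hu : ρ / 2 * ‖u‖ ^ 2 ≤ lmin * ‖v‖ ^ 2 := by
    have hsq := pow_le_pow_left₀ (by positivity) hΔ 2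
    refine le_of_mul_le_mul_left ?_ hρ
    nlinarith [sq_nonneg ‖v‖]
  have hpen : 0 ≤ ρ / 2 * ‖w - v + u‖ ^ 2 := by positivity
  simp only [augLagrangian]
  linarith [hlow v]

theorem exists_tendsto_augLagrangian (hρ : 0 < ρ) (hT : T.IsSymmetric)
    (hlow : ∀ x, lmin * ‖x‖ ^ 2 ≤ RCLike.re ⟪x, T x⟫_𝕜) (hup : ∀ x, ‖T x‖ ≤ lmax * ‖x‖)
    (hρ_descent : 8 * lmax ^ 2 ≤ ρ ^ 2) (hρ_bound : 2 * lmax ^ 2 ≤ ρ * lmin) (hf : ∀ x, 0 ≤ f x)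
    {w v u : ℕ → E}
    (hw : ∀ k, f (w (k + 2)) + ρ / 2 * ‖w (k + 2) - v (k + 1) + u (k + 1)‖ ^ 2
      ≤ f (w (k + 1)) + ρ / 2 * ‖w (k + 1) - v (k + 1) + u (k + 1)‖ ^ 2)
    (hopt : ∀ k, (2 : 𝕜) • T (v (k + 1)) = (ρ : 𝕜) • (w (k + 1) + u k - v (k + 1)))
    (hu : ∀ k, u (k + 1) = u k + w (k + 1) - v (k + 1)) :
    ∃ l, Tendsto (fun k => augLagrangian T f ρ (w k) (v k) (u k)) atTop (𝓝 l) := by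
  have hlmin : 0 ≤ lmin :=
    nonneg_of_mul_nonneg_right ((mul_nonneg zero_le_two (sq_nonneg lmax)).trans hρ_bound) hρ
  have hdual k : (ρ : 𝕜) • u (k + 1) = (2 : 𝕜) • T (v (k + 1)) :=
    smul_dual_eq_of_update (hopt k) (hu k)
  set L := fun k => augLagrangian T f ρ (w (k + 1)) (v (k + 1)) (u (k + 1))
  have hanti : Antitone L := antitone_nat_of_succ_le fun k =>
    augLagrangian_step_le hρ hT hlow hup hlmin hρ_descent (hdual k) (hw k) (hopt (k + 1))
      (hu (k + 1))
  have hbdd : BddBelow (Set.range L) :=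
    ⟨0, Set.forall_mem_range.2 fun k => augLagrangian_nonneg hρ hlow hup hρ_bound (hf _) (hdual k)⟩
  exact ⟨_, (tendsto_add_atTop_iff_nat 1).1 (tendsto_atTop_ciInf hanti hbdd)⟩

end AugmentedLagrangian

lemma two_smul_toEuclideanLin_eq_of_eq_inv {𝕜 n : Type*} [RCLike 𝕜] [Fintype n] [DecidableEq n]
    {A : Matrix n n 𝕜} (hA : A.PosDef) {ρ : ℝ} (hρ : 0 < ρ) {v y : EuclideanSpace 𝕜 n}
    (hv : v = (ρ : 𝕜) • toEuclideanLin (2 • A + (ρ : 𝕜) • 1)⁻¹ y) :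
    (2 : 𝕜) • toEuclideanLin A v = (ρ : 𝕜) • (y - v) := by
  set B := 2 • A + (ρ : 𝕜) • (1 : Matrix n n 𝕜) with hBdef
  have hB : B.PosDef := by
    rw [hBdef, two_nsmul]
    exact (hA.add hA).add (PosDef.one.smul (RCLike.ofReal_pos.2 hρ))
  have hBv : toEuclideanLin B v = (ρ : 𝕜) • y := by
    rw [hv, map_smul, ← LinearMap.comp_apply, ← toLpLin_mul_same,
      mul_nonsing_inv _ ((isUnit_iff_isUnit_det B).1 hB.isUnit), toLpLin_one, LinearMap.id_apply]
  rw [hBdef, map_add, map_nsmul, map_smul, toLpLin_one, LinearMap.add_apply, LinearMap.smul_apply,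
    LinearMap.smul_apply, LinearMap.id_apply] at hBv
  rw [smul_sub, ← hBv, ofNat_smul_eq_nsmul (R := 𝕜)]
  abel

theorem admm_lagrangian_converges_general
    {M : ℕ} (lam ρ : ℝ) (hlam : 0 < lam) (hρ : 0 < ρ)
    (Rx : Matrix (Fin M) (Fin M) ℂ) (hRx : Rx.PosDef)
    (a0 : EuclideanSpace ℂ (Fin M))
    (lmax lmin : ℝ)
    (hlmax : IsGreatest (Set.range hRx.posSemidef.1.eigenvalues) lmax)
    (hlmin : IsLeast (Set.range hRx.posSemidef.1.eigenvalues) lmin)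
    (hlmin_pos : 0 < lmin)
    (hρ_big : max (2 * Real.sqrt 2 * lmax) (2 * lmax ^ 2 / lmin) ≤ ρ)
    (w v u : ℕ → EuclideanSpace ℂ (Fin M))
    (hw : ∀ k : ℕ, 1 ≤ ‖(inner ℂ a0 (w (k + 1)) : ℂ)‖ ^ 2 ∧
      ∀ x : EuclideanSpace ℂ (Fin M), 1 ≤ ‖(inner ℂ a0 x : ℂ)‖ ^ 2 →
        lam * ∑ i, ‖w (k + 1) i‖ + ρ / 2 * ‖w (k + 1) - v k + u k‖ ^ 2 ≤
        lam * ∑ i, ‖x i‖ + ρ / 2 * ‖x - v k + u k‖ ^ 2)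
    (hv : ∀ k : ℕ, v (k + 1) = (ρ : ℂ) • mulVecE (2 • Rx + (ρ : ℂ) • 1)⁻¹ (w (k + 1) + u k))
    (hu : ∀ k : ℕ, u (k + 1) = u k + w (k + 1) - v (k + 1)) :
    ∃ l : ℝ, Filter.Tendsto (fun k : ℕ => lagr Rx lam ρ (w k) (v k) (u k))
      Filter.atTop (nhds l) := by
  set hH := hRx.posSemidef.1
  have hlmin_le i : lmin ≤ hH.eigenvalues i := hlmin.2 ⟨i, rfl⟩
  have hle_lmax i : hH.eigenvalues i ≤ lmax := hlmax.2 ⟨i, rfl⟩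
  have hlmax_pos : 0 < lmax := hlmin_pos.trans_le (hlmax.2 hlmin.1)
  have h8 : 8 * lmax ^ 2 ≤ ρ ^ 2 := by
    have := pow_le_pow_left₀ (by positivity) ((le_max_left _ _).trans hρ_big) 2
    rwa [mul_pow, mul_pow, Real.sq_sqrt zero_le_two, show (2 : ℝ) ^ 2 * 2 = 8 by norm_num] at this
  have h2 : 2 * lmax ^ 2 ≤ ρ * lmin := by
    have := (le_max_right _ _).trans hρ_big
    rwa [div_le_iff₀ hlmin_pos] at this
  -- `lagr Rx lam ρ` unfolds to `augLagrangian (toEuclideanLin Rx) (lam * ‖·‖₁) ρ`,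
  -- and `mulVecE` to `toEuclideanLin`.
  exact exists_tendsto_augLagrangian (T := toEuclideanLin Rx)
    (f := fun x => lam * ∑ i, ‖x i‖) hρ (isSymmetric_toEuclideanLin_iff.mpr hH)
    (hH.mul_sq_norm_le_re_inner_toEuclideanLin_self hlmin_le)
    (hH.norm_toEuclideanLin_le hlmax_pos.le fun i =>
      abs_le.2 ⟨by linarith [hlmin_le i], hle_lmax i⟩) h8 h2
    (fun x => by positivity) (fun k => (hw (k + 1)).2 _ (hw k).1)
    (fun k => two_smul_toEuclideanLin_eq_of_eq_inv hRx hρ (hv k)) hu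

/-- Theorem 1, part 1: If `R_x ≻ 0` and
`ρ ≥ max{2√2·λ_max(R_x), 2λ_max²(R_x)/λ_min(R_x)}`, then the augmented Lagrangian value
sequence generated by the ADMM iteration converges to a finite limit. -/
theorem admm_lagrangian_converges
    {M : ℕ} (lam ρ : ℝ) (hlam : 0 < lam) (hρ : 0 < ρ)
    (Rx : Matrix (Fin M) (Fin M) ℂ) (hRx : Rx.PosDef)
    (a0 : EuclideanSpace ℂ (Fin M)) (ha0 : a0 ≠ 0)
    (lmax lmin : ℝ)
    (hlmax : IsGreatest (Set.range hRx.posSemidef.1.eigenvalues) lmax)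
    (hlmin : IsLeast (Set.range hRx.posSemidef.1.eigenvalues) lmin)
    (hlmin_pos : 0 < lmin)
    (hρ_big : max (2 * Real.sqrt 2 * lmax) (2 * lmax ^ 2 / lmin) ≤ ρ)
    (w v u : ℕ → EuclideanSpace ℂ (Fin M))
    (hw : ∀ k : ℕ, 1 ≤ ‖(inner ℂ a0 (w (k + 1)) : ℂ)‖ ^ 2 ∧
      ∀ x : EuclideanSpace ℂ (Fin M), 1 ≤ ‖(inner ℂ a0 x : ℂ)‖ ^ 2 →
        lam * ∑ i, ‖w (k + 1) i‖ + ρ / 2 * ‖w (k + 1) - v k + u k‖ ^ 2 ≤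
        lam * ∑ i, ‖x i‖ + ρ / 2 * ‖x - v k + u k‖ ^ 2)
    (hv : ∀ k : ℕ, v (k + 1) = (ρ : ℂ) • mulVecE (2 • Rx + (ρ : ℂ) • 1)⁻¹ (w (k + 1) + u k))
    (hu : ∀ k : ℕ, u (k + 1) = u k + w (k + 1) - v (k + 1)) :
    ∃ l : ℝ, Filter.Tendsto (fun k : ℕ => lagr Rx lam ρ (w k) (v k) (u k))
      Filter.atTop (nhds l) :=
  admm_lagrangian_converges_general lam ρ hlam hρ Rx hRx a0 lmax lmin hlmax hlmin hlmin_pos hρ_big w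
    v u hw hv hu
end

section
/- (Theorem 2, KKT/stationarity at a fixed point) Let (w*, v*, u*) ∈ ℂ^M × ℂ^M × ℂ^M be a fixed point of the ADMM iteration for the sparse array beamforming problem; that is, (i) w* is a minimizer of w ↦ λ‖w‖₁ + (ρ/2)‖w − v* + u*‖₂² over {w : |⟨a₀, w⟩|² ≥ 1}; (ii) v* = ρ(2R_x + ρI)⁻¹(w* + u*); and (iii) u* = u* + w* − v*. Then, with the dual variable y* := ρu*, the following KKT-type conditions hold: (a) 2R_x v* = y*; (b) w* = v*; and (c) w* is a minimizer of w ↦ λ‖w‖₁ + Re⟨y*, w − v*⟩ + (ρ/2)‖w − w*‖₂² over the feasible set {w : |⟨a₀, w⟩|² ≥ 1}. -/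
open scoped ComplexOrder

/-! At a fixed point the `u`-update forces `w* = v*`. The `v`-update then says
`(2 R_x + ρ I) v* = ρ (v* + u*)`, i.e. `2 R_x v* = ρ u* = y*`; here `2 R_x + ρ I` is positive
definite, so the inverse in the `v`-update is a genuine inverse. Finally,
`‖x − v* + u*‖² = ‖x − v*‖² + 2 Re⟨u*, x − v*⟩ + ‖u*‖²`, so the objective of the `w`-update and
the objective in (c) differ by the constant `(ρ/2) ‖u*‖²` and have the same minimizers. -/

open scoped Matrix

section MulVecE

variable {M : ℕ}

theorem ofLp_mulVecE (A : Matrix (Fin M) (Fin M) ℂ) (x : EuclideanSpace ℂ (Fin M)) :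
    (mulVecE A x).ofLp = A *ᵥ x.ofLp :=
  rfl

theorem mulVecE_add (A B : Matrix (Fin M) (Fin M) ℂ) (x : EuclideanSpace ℂ (Fin M)) :
    mulVecE (A + B) x = mulVecE A x + mulVecE B x :=
  WithLp.ofLp_injective 2 <| by simp only [ofLp_mulVecE, WithLp.ofLp_add, Matrix.add_mulVec]

theorem mulVecE_smul (c : ℂ) (A : Matrix (Fin M) (Fin M) ℂ) (x : EuclideanSpace ℂ (Fin M)) :
    mulVecE (c • A) x = c • mulVecE A x :=
  WithLp.ofLp_injective 2 <| by simp only [ofLp_mulVecE, WithLp.ofLp_smul, Matrix.smul_mulVec]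

theorem mulVecE_nsmul (n : ℕ) (A : Matrix (Fin M) (Fin M) ℂ) (x : EuclideanSpace ℂ (Fin M)) :
    mulVecE (n • A) x = n • mulVecE A x := by
  rw [← Nat.cast_smul_eq_nsmul ℂ, mulVecE_smul, Nat.cast_smul_eq_nsmul]

theorem mulVecE_one (x : EuclideanSpace ℂ (Fin M)) : mulVecE 1 x = x :=
  WithLp.ofLp_injective 2 <| by rw [ofLp_mulVecE, Matrix.one_mulVec]

theorem mulVecE_smul_right (A : Matrix (Fin M) (Fin M) ℂ) (c : ℂ) (x : EuclideanSpace ℂ (Fin M)) :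
    mulVecE A (c • x) = c • mulVecE A x :=
  WithLp.ofLp_injective 2 <| by simp only [ofLp_mulVecE, WithLp.ofLp_smul, Matrix.mulVec_smul]

theorem mulVecE_mulVecE_inv {A : Matrix (Fin M) (Fin M) ℂ} (hA : IsUnit A.det)
    (x : EuclideanSpace ℂ (Fin M)) : mulVecE A (mulVecE A⁻¹ x) = x :=
  WithLp.ofLp_injective 2 <| by
    rw [ofLp_mulVecE, ofLp_mulVecE, Matrix.mulVec_mulVec, Matrix.mul_nonsing_inv A hA,
      Matrix.one_mulVec]

end MulVecE

theorem Matrix.PosSemidef.isUnit_det_add_smul_one {n : Type*} [Fintype n] [DecidableEq n]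
    {R : Matrix n n ℂ} (hR : R.PosSemidef) {ρ : ℝ} (hρ : 0 < ρ) :
    IsUnit (R + (ρ : ℂ) • 1).det :=
  (Matrix.isUnit_iff_isUnit_det _).mp
    (PosDef.posSemidef_add hR (PosDef.one.smul (by exact_mod_cast hρ))).isUnit

theorem two_smul_mulVecE_eq_of_eq_smul_mulVecE_inv {M : ℕ} {R : Matrix (Fin M) (Fin M) ℂ}
    (hR : R.PosSemidef) {ρ : ℝ} (hρ : 0 < ρ) {u v : EuclideanSpace ℂ (Fin M)}
    (hv : v = (ρ : ℂ) • mulVecE (2 • R + (ρ : ℂ) • 1)⁻¹ (v + u)) :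
    (2 : ℂ) • mulVecE R v = (ρ : ℂ) • u := by
  have hA : IsUnit (2 • R + (ρ : ℂ) • 1).det := by
    refine Matrix.PosSemidef.isUnit_det_add_smul_one ?_ hρ
    rw [two_nsmul]
    exact hR.add hR
  have hAv : mulVecE (2 • R + (ρ : ℂ) • 1) v = (ρ : ℂ) • (v + u) :=
    calc mulVecE (2 • R + (ρ : ℂ) • 1) v
        = mulVecE (2 • R + (ρ : ℂ) • 1) ((ρ : ℂ) • mulVecE (2 • R + (ρ : ℂ) • 1)⁻¹ (v + u)) :=
          congrArg _ hv
      _ = (ρ : ℂ) • (v + u) := by rw [mulVecE_smul_right, mulVecE_mulVecE_inv hA]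
  rw [mulVecE_add, mulVecE_nsmul, mulVecE_smul, mulVecE_one, smul_add, two_nsmul,
    add_comm _ ((ρ : ℂ) • u)] at hAv
  rw [two_smul]
  exact add_right_cancel hAv

section AugmentedLagrangian

variable {𝕜 E : Type*} [RCLike 𝕜] [NormedAddCommGroup E] [InnerProductSpace 𝕜 E]

theorem mul_half_norm_add_sq (ρ : ℝ) (z u : E) :
    ρ / 2 * ‖z + u‖ ^ 2 =
      RCLike.re (inner 𝕜 ((ρ : 𝕜) • u) z) + ρ / 2 * ‖z‖ ^ 2 + ρ / 2 * ‖u‖ ^ 2 := by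
  rw [norm_add_sq (𝕜 := 𝕜), inner_smul_real_left, RCLike.smul_re, inner_re_symm]
  ring

theorem isMinOn_add_re_inner_iff {f : E → ℝ} {S : Set E} {ρ : ℝ} {u v w : E} :
    IsMinOn (fun x => f x + RCLike.re (inner 𝕜 ((ρ : 𝕜) • u) (x - v)) + ρ / 2 * ‖x - v‖ ^ 2)
        S w ↔
      IsMinOn (fun x => f x + ρ / 2 * ‖x - v + u‖ ^ 2) S w := by
  simp only [isMinOn_iff, mul_half_norm_add_sq (𝕜 := 𝕜) ρ (_ - v) u]
  exact forall₂_congr fun x _ => by constructor <;> intro h <;> linarith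

end AugmentedLagrangian

theorem admm_fixed_point_is_kkt_general
    {M : ℕ} (lam ρ : ℝ) (hρ : 0 < ρ)
    (Rx : Matrix (Fin M) (Fin M) ℂ) (hRx : Rx.PosSemidef)
    (a0 : EuclideanSpace ℂ (Fin M))
    (wstar vstar ustar ystar : EuclideanSpace ℂ (Fin M))
    (hy : ystar = (ρ : ℂ) • ustar)
    (hwfix : 1 ≤ ‖(inner ℂ a0 wstar : ℂ)‖ ^ 2 ∧
      ∀ x : EuclideanSpace ℂ (Fin M), 1 ≤ ‖(inner ℂ a0 x : ℂ)‖ ^ 2 →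
        lam * ∑ i, ‖wstar i‖ + ρ / 2 * ‖wstar - vstar + ustar‖ ^ 2 ≤
        lam * ∑ i, ‖x i‖ + ρ / 2 * ‖x - vstar + ustar‖ ^ 2)
    (hvfix : vstar = (ρ : ℂ) • mulVecE (2 • Rx + (ρ : ℂ) • 1)⁻¹ (wstar + ustar))
    (hufix : ustar = ustar + wstar - vstar) :
    (2 : ℂ) • mulVecE Rx vstar = ystar ∧
    wstar = vstar ∧
    ∀ x : EuclideanSpace ℂ (Fin M), 1 ≤ ‖(inner ℂ a0 x : ℂ)‖ ^ 2 →
      lam * ∑ i, ‖wstar i‖ + (inner ℂ ystar (wstar - vstar) : ℂ).re +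
          ρ / 2 * ‖wstar - wstar‖ ^ 2 ≤
      lam * ∑ i, ‖x i‖ + (inner ℂ ystar (x - vstar) : ℂ).re +
          ρ / 2 * ‖x - wstar‖ ^ 2 := by
  obtain rfl : wstar = vstar := by
    rwa [add_sub_assoc, left_eq_add, sub_eq_zero] at hufix
  subst hy
  refine ⟨two_smul_mulVecE_eq_of_eq_smul_mulVecE_inv hRx hρ hvfix, rfl, ?_⟩
  have hmin : IsMinOn (fun x : EuclideanSpace ℂ (Fin M) =>
      lam * ∑ i, ‖x i‖ + ρ / 2 * ‖x - wstar + ustar‖ ^ 2)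
      {x | 1 ≤ ‖(inner ℂ a0 x : ℂ)‖ ^ 2} wstar :=
    isMinOn_iff.mpr hwfix.2
  exact isMinOn_iff.mp (isMinOn_add_re_inner_iff (𝕜 := ℂ) |>.mpr hmin)

/-- Theorem 2: A fixed point `(w*, v*, u*)` of the ADMM iteration satisfies,
with `y* = ρu*`, the KKT-type conditions: (a) `2R_x v* = y*`; (b) `w* = v*`; (c) `w*`
minimizes `w ↦ λ‖w‖₁ + Re⟨y*, w − v*⟩ + (ρ/2)‖w − w*‖₂²` over `{w : |⟨a₀, w⟩|² ≥ 1}`. -/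
theorem admm_fixed_point_is_kkt
    {M : ℕ} (lam ρ : ℝ) (hlam : 0 < lam) (hρ : 0 < ρ)
    (Rx : Matrix (Fin M) (Fin M) ℂ) (hRx : Rx.PosSemidef)
    (a0 : EuclideanSpace ℂ (Fin M)) (ha0 : a0 ≠ 0)
    (wstar vstar ustar ystar : EuclideanSpace ℂ (Fin M))
    (hy : ystar = (ρ : ℂ) • ustar)
    (hwfix : 1 ≤ ‖(inner ℂ a0 wstar : ℂ)‖ ^ 2 ∧
      ∀ x : EuclideanSpace ℂ (Fin M), 1 ≤ ‖(inner ℂ a0 x : ℂ)‖ ^ 2 →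
        lam * ∑ i, ‖wstar i‖ + ρ / 2 * ‖wstar - vstar + ustar‖ ^ 2 ≤
        lam * ∑ i, ‖x i‖ + ρ / 2 * ‖x - vstar + ustar‖ ^ 2)
    (hvfix : vstar = (ρ : ℂ) • mulVecE (2 • Rx + (ρ : ℂ) • 1)⁻¹ (wstar + ustar))
    (hufix : ustar = ustar + wstar - vstar) :
    (2 : ℂ) • mulVecE Rx vstar = ystar ∧
    wstar = vstar ∧
    ∀ x : EuclideanSpace ℂ (Fin M), 1 ≤ ‖(inner ℂ a0 x : ℂ)‖ ^ 2 →
      lam * ∑ i, ‖wstar i‖ + (inner ℂ ystar (wstar - vstar) : ℂ).re +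
          ρ / 2 * ‖wstar - wstar‖ ^ 2 ≤
      lam * ∑ i, ‖x i‖ + (inner ℂ ystar (x - vstar) : ℂ).re +
          ρ / 2 * ‖x - wstar‖ ^ 2 :=
  admm_fixed_point_is_kkt_general lam ρ hρ Rx hRx a0 wstar vstar ustar ystar hy hwfix hvfix hufix
end
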